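/- For every integer n ≥ 1, the sequence R_n := (∑_{k=1}^n 1/k) - log(n + 1/2) satisfies 1/(24(n+1)^2) < R_n - γ < 1/(24 n^2), where γ is the Euler–Mascheroni constant. -/

import Mathlib

/-!
Put `x = 1 / (2n + 2)`. Since `(n + 3/2) / (n + 1/2) = (1 + x) / (1 - x)`, the increment
`R_n - R_{n+1}` equals `log (1 + x) - log (1 - x) - 2x = ∑_{k ≥ 1} 2 x^(2k+1) / (2k+1)`.
Bounding this series below by its first term and above by a geometric series squeezes the
increment strictly between `1/(24(n+1)^2) - 1/(24(n+2)^2)` and `1/(24n^2) - 1/(24(n+1)^2)`.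
Hence `R_n - 1/(24(n+1)^2)` decreases strictly and `R_n - 1/(24n^2)` increases strictly for
`n ≥ 1`; both tend to `γ`, which therefore lies strictly between them.
-/

open Real Finset Filter Topology

theorem StrictMono.gt_of_tendsto {α β : Type*} [TopologicalSpace α] [Preorder α]
    [OrderClosedTopology α] [PartialOrder β] [IsDirectedOrder β] [NoMaxOrder β] {f : β → α}
    {a : α} (hf : StrictMono f) (ha : Tendsto f atTop (𝓝 a)) (b : β) : f b < a := by
  obtain ⟨c, hbc⟩ := exists_gt b
  exact (hf hbc).trans_le (hf.monotone.ge_of_tendsto ha c)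

theorem StrictAnti.lt_of_tendsto {α β : Type*} [TopologicalSpace α] [Preorder α]
    [OrderClosedTopology α] [PartialOrder β] [IsDirectedOrder β] [NoMaxOrder β] {f : β → α}
    {a : α} (hf : StrictAnti f) (ha : Tendsto f atTop (𝓝 a)) (b : β) : a < f b :=
  StrictMono.gt_of_tendsto (α := αᵒᵈ) hf.dual_right ha b

theorem tendsto_one_div_mul_add_one_sq_atTop_nhds_zero_nat (c : ℝ) :
    Tendsto (fun n : ℕ => 1 / (c * ((n : ℝ) + 1) ^ 2)) atTop (𝓝 0) := by
  have h := (tendsto_one_div_add_atTop_nhds_zero_nat.pow 2).const_mul c⁻¹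
  rw [zero_pow two_ne_zero, mul_zero] at h
  refine h.congr fun n => ?_
  rw [div_pow, one_pow, one_div, one_div, mul_inv]

namespace Real

variable {x : ℝ}

theorem hasSum_log_sub_log_sub_two_mul (hx : |x| < 1) :
    HasSum (fun k : ℕ => 2 / (2 * k + 3) * x ^ (2 * k + 3))
      (log (1 + x) - log (1 - x) - 2 * x) := by
  have h := (hasSum_nat_add_iff' 1).mpr (hasSum_log_sub_log_of_abs_lt_one hx)
  have hterm (k : ℕ) : 2 / (2 * k + 3) * x ^ (2 * k + 3) =
      2 * (1 / (2 * ((k + 1 : ℕ) : ℝ) + 1)) * x ^ (2 * (k + 1) + 1) := by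
    push_cast
    ring_nf
  simpa [hterm] using h

theorem lt_log_sub_log_sub_two_mul (hx₀ : 0 < x) (hx₁ : x < 1) :
    2 / 3 * x ^ 3 < log (1 + x) - log (1 - x) - 2 * x := by
  refine hasSum_lt (f := Pi.single 0 (2 / 3 * x ^ 3)) (i := 1) (fun k => ?_) ?_
    (hasSum_pi_single 0 _) (hasSum_log_sub_log_sub_two_mul (abs_lt.mpr ⟨by linarith, hx₁⟩))
  · rcases eq_or_ne k 0 with rfl | hk
    · simp
    · rw [Pi.single_eq_of_ne hk]
      positivity
  · rw [Pi.single_eq_of_ne one_ne_zero]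
    positivity

theorem log_sub_log_sub_two_mul_le (hx₀ : 0 ≤ x) (hx₁ : x < 1) :
    log (1 + x) - log (1 - x) - 2 * x ≤ 2 / 3 * x ^ 3 / (1 - x ^ 2) := by
  have hx₂ : x ^ 2 < 1 := by nlinarith
  have hgeom := (hasSum_geometric_of_lt_one (by positivity) hx₂).mul_left (2 / 3 * x ^ 3)
  refine hasSum_le (fun k => ?_)
    (hasSum_log_sub_log_sub_two_mul (abs_lt.mpr ⟨by linarith, hx₁⟩)) hgeom
  rw [← pow_mul, pow_add, mul_comm (x ^ _) (x ^ 3), ← mul_assoc, mul_comm 2 k]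
  gcongr
  linarith

end Real

noncomputable def detempleSeq (n : ℕ) : ℝ := harmonic n - log (n + 1 / 2)

theorem detempleSeq_eq_sum_sub_log (n : ℕ) :
    detempleSeq n = (∑ k ∈ Icc 1 n, (1 : ℝ) / k) - log (n + 1 / 2) := by
  simp [detempleSeq, harmonic_eq_sum_Icc]

theorem tendsto_detempleSeq : Tendsto detempleSeq atTop (𝓝 eulerMascheroniConstant) := by
  refine tendsto_of_tendsto_of_tendsto_of_le_of_le' tendsto_harmonic_sub_log_add_one
    tendsto_harmonic_sub_log (.of_forall fun n => ?_) ?_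
  · unfold detempleSeq
    gcongr
    norm_num
  · filter_upwards [eventually_ge_atTop 1] with n hn
    unfold detempleSeq
    gcongr
    simp

theorem one_div_two_mul_natCast_add_one_lt_one (n : ℕ) : 1 / (2 * ((n : ℝ) + 1)) < 1 := by
  rw [div_lt_one (by positivity)]
  linarith [n.cast_nonneg (α := ℝ)]

theorem detempleSeq_sub_detempleSeq_succ (n : ℕ) :
    detempleSeq n - detempleSeq (n + 1) =
      log (1 + 1 / (2 * (n + 1))) - log (1 - 1 / (2 * (n + 1))) - 2 * (1 / (2 * (n + 1))) := by
  have hx := sub_pos.mpr (one_div_two_mul_natCast_add_one_lt_one n)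
  have hratio : (1 + 1 / (2 * ((n : ℝ) + 1))) / (1 - 1 / (2 * (n + 1))) =
      ((n + 1 : ℕ) + 1 / 2) / (n + 1 / 2) := by
    rw [div_eq_div_iff hx.ne' (by positivity)]
    field_simp
    push_cast
    ring
  rw [← log_div (by positivity) hx.ne', hratio, log_div (by positivity) (by positivity),
    detempleSeq, detempleSeq, harmonic_succ]
  push_cast
  field_simp
  ring

theorem detempleSeq_sub_succ_gt (n : ℕ) :
    1 / (24 * ((n : ℝ) + 1) ^ 2) - 1 / (24 * ((n : ℝ) + 2) ^ 2) <
      detempleSeq n - detempleSeq (n + 1) := by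
  rw [detempleSeq_sub_detempleSeq_succ]
  refine lt_trans ?_ (Real.lt_log_sub_log_sub_two_mul (by positivity)
    (one_div_two_mul_natCast_add_one_lt_one n))
  field_simp
  ring_nf
  nlinarith [n.cast_nonneg (α := ℝ)]

theorem detempleSeq_sub_succ_lt {n : ℕ} (hn : 0 < n) :
    detempleSeq n - detempleSeq (n + 1) <
      1 / (24 * (n : ℝ) ^ 2) - 1 / (24 * ((n : ℝ) + 1) ^ 2) := by
  rw [detempleSeq_sub_detempleSeq_succ]
  refine (Real.log_sub_log_sub_two_mul_le (by positivity)
    (one_div_two_mul_natCast_add_one_lt_one n)).trans_lt ?_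
  have hn' : (0 : ℝ) < n := by exact_mod_cast hn
  have hfactor : 1 - (1 / (2 * ((n : ℝ) + 1))) ^ 2 =
      (2 * n + 1) * (2 * n + 3) / (2 * (n + 1)) ^ 2 := by
    field_simp
    ring
  rw [hfactor]
  field_simp
  ring_nf
  nlinarith

theorem strictAnti_detempleSeq_sub :
    StrictAnti fun n : ℕ => detempleSeq n - 1 / (24 * ((n : ℝ) + 1) ^ 2) :=
  strictAnti_nat_of_succ_lt fun n => by
    have h := detempleSeq_sub_succ_gt n
    push_cast
    rw [show (n : ℝ) + 1 + 1 = n + 2 by ring]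
    linarith

theorem strictMono_detempleSeq_succ_sub :
    StrictMono fun n : ℕ => detempleSeq (n + 1) - 1 / (24 * ((n : ℝ) + 1) ^ 2) :=
  strictMono_nat_of_lt_succ fun n => by
    have h := detempleSeq_sub_succ_lt n.succ_pos
    push_cast at h ⊢
    linarith

theorem detemple_inequality (n : ℕ) (hn : 1 ≤ n) :
    1 / (24 * ((n : ℝ) + 1) ^ 2) <
      (∑ k ∈ Finset.Icc 1 n, (1 : ℝ) / k) - Real.log ((n : ℝ) + 1 / 2) -
        Real.eulerMascheroniConstant ∧
    (∑ k ∈ Finset.Icc 1 n, (1 : ℝ) / k) - Real.log ((n : ℝ) + 1 / 2) -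
        Real.eulerMascheroniConstant < 1 / (24 * (n : ℝ) ^ 2) := by
  have hzero := tendsto_one_div_mul_add_one_sq_atTop_nhds_zero_nat 24
  have hlower := strictAnti_detempleSeq_sub.lt_of_tendsto
    (by simpa only [sub_zero] using tendsto_detempleSeq.sub hzero) n
  obtain ⟨k, rfl⟩ := Nat.exists_eq_add_of_le' hn
  have hupper := strictMono_detempleSeq_succ_sub.gt_of_tendsto
    (by simpa only [sub_zero, Function.comp_def] using
      (tendsto_detempleSeq.comp (tendsto_add_atTop_nat 1)).sub hzero) k
  rw [← detempleSeq_eq_sum_sub_log]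
  push_cast at hlower hupper ⊢
  constructor <;> linarith
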